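/- Let E be a directed graph and let H = {v ∈ E^0 : every circuit of E all of whose vertices lie in V(v) is either terminal or transitory, and every infinite path λ of E all of whose vertices lie in V(v) has N_λ finite}. Then H is a hereditary and saturated subset of E^0. -/

import Mathlib

namespace CKGraph

variable {V E : Type*}

/-- One-step relation: there is an edge from `v` to `w`. -/
def Step (o t : E → V) (v w : V) : Prop := ∃ e, o e = v ∧ t e = w

/-- `Reach o t v w` means `v ≥ w`: there is a (possibly trivial) directed path
from `v` to `w`. -/
def Reach (o t : E → V) (v w : V) : Prop := Relation.ReflTransGen (Step o t) v w

/-- A finite path: consecutive edges are composable. -/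
def IsPath (o t : E → V) (p : List E) : Prop := List.Chain' (fun e f => t e = o f) p

/-- An infinite path. -/
def IsInfPath (o t : E → V) (p : ℕ → E) : Prop := ∀ n, t (p n) = o (p (n + 1))

/-- Tail-equivalence of infinite paths: they eventually share the same tail. -/
def InfEquiv (p q : ℕ → E) : Prop := ∃ j k : ℕ, ∀ r : ℕ, p (j + r) = q (k + r)

/-- The set of vertices occurring in a finite path. -/
def FinPathVerts (o t : E → V) (p : List E) : Set V := {v | ∃ e ∈ p, o e = v ∨ t e = v}

/-- The set of vertices occurring in an infinite path. -/
def InfPathVerts (o t : E → V) (p : ℕ → E) : Set V := {v | ∃ n, o (p n) = v}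

/-- Every vertex emits at most finitely many edges. -/
def RowFinite (o : E → V) : Prop := ∀ v : V, {e : E | o e = v}.Finite

/-- Every vertex emits at least one edge. -/
def NoSinks (o : E → V) : Prop := ∀ v : V, ∃ e : E, o e = v

/-- Condition (M): for every vertex `v` and every infinite path `l`, only finitely
many infinite paths begin at `v` and are equivalent to `l`. -/
def CondM (o t : E → V) : Prop :=
  ∀ (v : V) (l : ℕ → E), IsInfPath o t l →
    {p : ℕ → E | IsInfPath o t p ∧ o (p 0) = v ∧ InfEquiv p l}.Finite

/-- A circuit: a finite path of positive length whose origin and terminus agree. -/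
def IsCircuit (o t : E → V) (p : List E) : Prop :=
  IsPath o t p ∧ ∃ h : p ≠ [], o (p.head h) = t (p.getLast h)

/-- An exit of a circuit: an edge not on the circuit whose origin is a vertex of
the circuit. -/
def IsExit (o t : E → V) (p : List E) (e : E) : Prop :=
  e ∉ p ∧ o e ∈ FinPathVerts o t p

/-- A terminal circuit: a circuit with no exit. -/
def TerminalCircuit (o t : E → V) (p : List E) : Prop :=
  IsCircuit o t p ∧ ∀ e : E, ¬ IsExit o t p e

/-- A transitory circuit: a circuit with an exit, none of whose exits gets back
to the circuit. -/
def TransitoryCircuit (o t : E → V) (p : List E) : Prop :=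
  IsCircuit o t p ∧ (∃ e : E, IsExit o t p e) ∧
    ∀ e : E, IsExit o t p e → ∀ w ∈ FinPathVerts o t p, ¬ Reach o t (t e) w

/-- The set of vertices of the infinite path `l` that emit multiple edges
returning to `l`; its cardinality is `N_l`. -/
def ReturnVerts (o t : E → V) (l : ℕ → E) : Set V :=
  {v | v ∈ InfPathVerts o t l ∧ ∃ e f : E, e ≠ f ∧ o e = v ∧ o f = v ∧
    (∃ w ∈ InfPathVerts o t l, Reach o t (t e) w) ∧
    (∃ w ∈ InfPathVerts o t l, Reach o t (t f) w)}

/-- A maximal tail. -/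
def MaximalTail (o t : E → V) (γ : Set V) : Prop :=
  γ.Nonempty ∧
  (∀ v₁ ∈ γ, ∀ v₂ ∈ γ, ∃ z ∈ γ, Reach o t v₁ z ∧ Reach o t v₂ z) ∧
  (∀ v ∈ γ, ∃ e : E, o e = v ∧ t e ∈ γ) ∧
  (∀ v w : V, Reach o t v w → w ∈ γ → v ∈ γ)

/-- The edge set of the induced subgraph `Graph(γ)`. -/
def edgesIn (o t : E → V) (γ : Set V) : Set E := {e | o e ∈ γ ∧ t e ∈ γ}

/-- One-step relation in the subgraph with edge set `S`. -/
def StepIn (o t : E → V) (S : Set E) (v w : V) : Prop := ∃ e ∈ S, o e = v ∧ t e = w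

/-- Reachability inside the subgraph with edge set `S`. -/
def ReachIn (o t : E → V) (S : Set E) (v w : V) : Prop :=
  Relation.ReflTransGen (StepIn o t S) v w

/-- `H` is saturated in the subgraph with vertex set `V0` and edge set `E0`:
every non-singular vertex of the subgraph all of whose successors lie in `H`
belongs to `H`. -/
def SaturatedIn (o t : E → V) (V0 : Set V) (E0 : Set E) (H : Set V) : Prop :=
  ∀ v ∈ V0, (∃ e ∈ E0, o e = v) → {e ∈ E0 | o e = v}.Finite →
    (∀ e ∈ E0, o e = v → t e ∈ H) → v ∈ H

/-- The saturation of `S` in the subgraph `(V0, E0)`: the smallest subset of `V0`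
containing `S` which is saturated in the subgraph. -/
def saturationIn (o t : E → V) (V0 : Set V) (E0 : Set E) (S : Set V) : Set V :=
  ⋂₀ {H : Set V | S ⊆ H ∧ H ⊆ V0 ∧ SaturatedIn o t V0 E0 H}

/-- A hereditary subset of vertices. -/
def Hereditary (o t : E → V) (H : Set V) : Prop :=
  ∀ v ∈ H, ∀ w : V, Reach o t v w → w ∈ H

/-- A singular vertex: a sink or an infinite emitter. -/
def Singular (o : E → V) (v : V) : Prop :=
  (¬ ∃ e : E, o e = v) ∨ {e : E | o e = v}.Infinite

/-- A saturated subset of vertices: every non-singular vertex all of whose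
successors lie in `H` belongs to `H`. -/
def Saturated (o t : E → V) (H : Set V) : Prop :=
  ∀ v : V, ¬ Singular o v → (∀ e : E, o e = v → t e ∈ H) → v ∈ H

/-- The saturation of `S`: the smallest saturated set containing `S`. -/
def saturation (o t : E → V) (S : Set V) : Set V :=
  ⋂₀ {H : Set V | S ⊆ H ∧ Saturated o t H}


/-- The condition defining `H`: every circuit of `E` all of whose vertices lie in
`V(v)` is terminal or transitory, and every infinite path of `E` all of whose
vertices lie in `V(v)` has finitely many vertices emitting multiple edges
returning to it. -/
def TypeIAt (o t : E → V) (v : V) : Prop :=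
  (∀ p : List E, IsCircuit o t p → FinPathVerts o t p ⊆ {w : V | Reach o t v w} →
    TerminalCircuit o t p ∨ TransitoryCircuit o t p) ∧
  (∀ l : ℕ → E, IsInfPath o t l → InfPathVerts o t l ⊆ {w : V | Reach o t v w} →
    (ReturnVerts o t l).Finite)

/-!
Along a path `v ≥ w` the set `V(w)` shrinks, so the defining condition passes from `v` to `w`.
For saturation: `v ≥ w` followed by an edge `w → w'` is a path of positive length, so its first
edge `e` leaves `v` and `t e ≥ w'`. Taking for `w → w'` the last edge of a circuit inside `V(v)`
puts the whole circuit into `V(t e)`; taking the first edge of an infinite path `λ` puts its tail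
into `V(t e)`, and dropping the first vertex of `λ` changes `N_λ` by at most one.
-/

section

variable {o t : E → V}

lemma exists_edge_reach_of_reach_origin {v : V} {f : E} (h : Reach o t v (o f)) :
    ∃ e, o e = v ∧ Reach o t (t e) (t f) := by
  obtain ⟨u, ⟨e, he, rfl⟩, hu⟩ :=
    Relation.TransGen.head'_iff.mp (Relation.TransGen.tail' h ⟨f, rfl, rfl⟩)
  exact ⟨e, he, hu⟩

lemma TypeIAt.of_reach {v w : V} (hvw : Reach o t v w) (hv : TypeIAt o t v) : TypeIAt o t w :=
  ⟨fun p hp hsub => hv.1 p hp fun _ hx => hvw.trans (hsub hx),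
    fun l hl hsub => hv.2 l hl fun _ hx => hvw.trans (hsub hx)⟩

lemma mem_finPathVerts_cons {e : E} {q : List E} {w : V} :
    w ∈ FinPathVerts o t (e :: q) ↔ o e = w ∨ t e = w ∨ w ∈ FinPathVerts o t q := by
  simp only [FinPathVerts, Set.mem_ofPred_eq, List.mem_cons, exists_eq_or_imp, or_assoc]

lemma IsPath.reach_of_mem_finPathVerts {e : E} {q : List E} (hp : IsPath o t (e :: q)) {w : V}
    (hw : w ∈ FinPathVerts o t (e :: q)) : Reach o t (o e) w := by
  rcases mem_finPathVerts_cons.mp hw with rfl | rfl | hw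
  · exact .refl
  · exact .single ⟨e, rfl, rfl⟩
  match q, hp, hw with
  | [], _, ⟨_, h, _⟩ => exact absurd h List.not_mem_nil
  | f :: r, hp, hw =>
    obtain ⟨hef, hfr⟩ := List.isChain_cons_cons.mp hp
    exact .head ⟨e, rfl, hef⟩ (IsPath.reach_of_mem_finPathVerts hfr hw)

lemma IsInfPath.reach_of_mem_infPathVerts {l : ℕ → E} (hl : IsInfPath o t l) {w : V}
    (hw : w ∈ InfPathVerts o t l) : Reach o t (o (l 0)) w := by
  obtain ⟨n, rfl⟩ := hw
  induction n with
  | zero => exact .refl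
  | succ n ih => exact ih.tail ⟨l n, rfl, hl n⟩

lemma IsInfPath.tail {l : ℕ → E} (hl : IsInfPath o t l) : IsInfPath o t (fun k => l (k + 1)) :=
  fun k => hl (k + 1)

lemma returnVerts_subset_insert_tail {l : ℕ → E} (hl : IsInfPath o t l) :
    ReturnVerts o t l ⊆ insert (o (l 0)) (ReturnVerts o t (fun k => l (k + 1))) := by
  have returns_to_tail : ∀ {x : V}, (∃ w ∈ InfPathVerts o t l, Reach o t x w) →
      ∃ w ∈ InfPathVerts o t (fun k => l (k + 1)), Reach o t x w := by
    rintro x ⟨_, ⟨n, rfl⟩, hx⟩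
    exact ⟨_, ⟨n, rfl⟩, hx.tail ⟨l n, rfl, hl n⟩⟩
  rintro x ⟨⟨n, rfl⟩, e, f, hef, he, hf, hre, hrf⟩
  cases n with
  | zero => exact .inl rfl
  | succ n => exact .inr ⟨⟨n, rfl⟩, e, f, hef, he, hf, returns_to_tail hre, returns_to_tail hrf⟩

end

theorem stmt10_general (o t : E → V) :
    Hereditary o t {v : V | TypeIAt o t v} ∧
    Saturated o t {v : V | TypeIAt o t v} := by
  refine ⟨fun v hv w hvw => hv.of_reach hvw, fun v _ hsucc => ⟨?_, ?_⟩⟩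
  · rintro (_ | ⟨e, q⟩) hp hsub
    · exact absurd rfl hp.2.1
    obtain ⟨hne, hclosed⟩ := hp.2
    obtain ⟨f, hf, hreach⟩ :=
      exists_edge_reach_of_reach_origin (hsub ⟨_, List.getLast_mem hne, Or.inl rfl⟩)
    rw [← hclosed] at hreach
    exact (hsucc f hf).1 _ hp fun w hw => hreach.trans (hp.1.reach_of_mem_finPathVerts hw)
  · intro l hl hsub
    obtain ⟨f, hf, hreach⟩ := exists_edge_reach_of_reach_origin (hsub ⟨0, rfl⟩)
    have htail : (ReturnVerts o t (fun k => l (k + 1))).Finite := by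
      refine (hsucc f hf).2 _ hl.tail fun w hw => hreach.trans ?_
      rw [hl 0]
      exact hl.tail.reach_of_mem_infPathVerts hw
    exact (htail.insert _).subset (returnVerts_subset_insert_tail hl)

/-- The set `H = {v | E(v) satisfies (1) and (2)}` is hereditary
and saturated. -/
theorem stmt10 [Countable V] [Countable E] (o t : E → V) :
    Hereditary o t {v : V | TypeIAt o t v} ∧
    Saturated o t {v : V | TypeIAt o t v} :=
  stmt10_general o t

end CKGraph
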